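/- For all partial Boolean functions f and g and every ε ∈ [0, 1/2), R̄_ε(f ∘ g) ≥ R̄_ε(f) · RS(g). -/

import Mathlib

/-! ### Decision trees -/

/-- A deterministic decision tree querying positions of type `ι`, receiving answers
in `α`, and producing an output in `β`. -/
inductive DTree (ι α β : Type) : Type
  | leaf (b : β) : DTree ι α β
  | node (i : ι) (next : α → DTree ι α β) : DTree ι α β

namespace DTree

variable {ι α β : Type}

/-- The output of a decision tree on input `x`. -/
def output : DTree ι α β → (ι → α) → β
  | leaf b, _ => b
  | node i next, x => (next (x i)).output x

/-- The number of queries made by a decision tree on input `x`. -/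
def cost : DTree ι α β → (ι → α) → ℕ
  | leaf _, _ => 0
  | node i next, x => (next (x i)).cost x + 1

/-- The set of positions queried by a decision tree on input `x`. -/
def queries : DTree ι α β → (ι → α) → Set ι
  | leaf _, _ => ∅
  | node i next, x => insert i ((next (x i)).queries x)

end DTree

/-- A partial function on inputs `ι → α` with outputs in `β`; `none` means undefined
(the domain is the set of inputs mapped to `some` value). -/
abbrev PFn (ι α β : Type) := (ι → α) → Option β

/-- `t` computes the partial function `f` (correct on every input of the domain). -/
def DTree.computesP {ι α β : Type} (t : DTree ι α β) (f : PFn ι α β) : Prop :=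
  ∀ x b, f x = some b → t.output x = b

/-- Deterministic query complexity `D(f)`. -/
noncomputable def Dq {ι α β : Type} (f : PFn ι α β) : ℝ :=
  sInf {T : ℝ | 0 ≤ T ∧ ∃ t : DTree ι α β, t.computesP f ∧ ∀ x, (t.cost x : ℝ) ≤ T}

/-! ### Randomized query algorithms -/

/-- A randomized query algorithm: a finitely supported probability distribution over
deterministic decision trees. -/
structure RandAlg (ι α β : Type) where
  Ω : Type
  [fin : Fintype Ω]
  p : Ω → ℝ
  nonneg : ∀ ω, 0 ≤ p ω
  sum_one : ∑ ω, p ω = 1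
  tree : Ω → DTree ι α β

namespace RandAlg

variable {ι α β : Type}

/-- Expected number of queries of `A` on input `x`. -/
noncomputable def expCost (A : RandAlg ι α β) (x : ι → α) : ℝ :=
  letI := A.fin
  ∑ ω, A.p ω * ((A.tree ω).cost x : ℝ)

open Classical in
/-- Probability that `A` outputs `b` on input `x`. -/
noncomputable def succProb (A : RandAlg ι α β) (x : ι → α) (b : β) : ℝ :=
  letI := A.fin
  ∑ ω, if (A.tree ω).output x = b then A.p ω else 0

/-- `A` computes `f` with error at most `ε`: on every input of the domain the correct
output is produced with probability at least `1 - ε`. -/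
def Computes (A : RandAlg ι α β) (f : PFn ι α β) (ε : ℝ) : Prop :=
  ∀ x b, f x = some b → 1 - ε ≤ A.succProb x b

/-- The worst-case cost of `A` (over all inputs and all trees in the support) is at most `T`. -/
def WCostLe (A : RandAlg ι α β) (T : ℝ) : Prop :=
  ∀ ω, A.p ω ≠ 0 → ∀ x, ((A.tree ω).cost x : ℝ) ≤ T

/-- The expected cost of `A` on every input of the domain of `f` is at most `T`. -/
def ECostLe (A : RandAlg ι α β) (f : PFn ι α β) (T : ℝ) : Prop :=
  ∀ x, (f x).isSome → A.expCost x ≤ T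

end RandAlg

/-- `R_ε(f)`: minimum worst-case cost of an `ε`-error randomized algorithm for `f`. -/
noncomputable def Rw {ι α β : Type} (ε : ℝ) (f : PFn ι α β) : ℝ :=
  sInf {T : ℝ | 0 ≤ T ∧ ∃ A : RandAlg ι α β, A.Computes f ε ∧ A.WCostLe T}

/-- `R̄_ε(f)`: minimum expected cost of an `ε`-error randomized algorithm for `f`. -/
noncomputable def Rbar {ι α β : Type} (ε : ℝ) (f : PFn ι α β) : ℝ :=
  sInf {T : ℝ | 0 ≤ T ∧ ∃ A : RandAlg ι α β, A.Computes f ε ∧ A.ECostLe f T}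

/-- `R₀(f)`: zero-error expected randomized query complexity. -/
noncomputable def R0 {ι α β : Type} (f : PFn ι α β) : ℝ := Rbar 0 f

/-- `R(f) := R_{1/3}(f)`: bounded-error randomized query complexity. -/
noncomputable def Rb {ι α β : Type} (f : PFn ι α β) : ℝ := Rw (1/3) f

/-- The total function `f` viewed as a partial function. -/
def tot {ι α β : Type} (f : (ι → α) → β) : PFn ι α β := fun x => some (f x)


/-! ### Sabotage complexity and composition -/

/-- The four-letter alphabet `{0, 1, *, †}` of sabotaged inputs. -/
inductive Sab : Type
  | zero : Sab
  | one : Sab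
  | star : Sab
  | dagger : Sab
deriving DecidableEq

/-- Embedding of Boolean values into the sabotage alphabet. -/
def Sab.ofBool : Bool → Sab
  | false => Sab.zero
  | true => Sab.one

/-- `p` is consistent with the Boolean input `x`: wherever `p` has a Boolean entry,
it agrees with `x`. -/
def SabConsistent {ι : Type} (p : ι → Sab) (x : ι → Bool) : Prop :=
  ∀ i, p i = Sab.ofBool (x i) ∨ p i = Sab.star ∨ p i = Sab.dagger

/-- `p` is a sabotaged input for `f` using the sabotage symbol `s`: all entries of `p`
lie in `{0, 1, s}` and `p` is consistent with both a `0`-input and a `1`-input of `f`. -/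
def IsSabotaged {ι : Type} (f : PFn ι Bool Bool) (s : Sab) (p : ι → Sab) : Prop :=
  (∀ i, p i = Sab.zero ∨ p i = Sab.one ∨ p i = s) ∧
  ∃ x y, (f x).isSome ∧ (f y).isSome ∧ f x ≠ f y ∧ SabConsistent p x ∧ SabConsistent p y

open Classical in
/-- The sabotage problem `f_sab` associated with `f`: it is `0` on `P_f` (inputs
sabotaged with `*`) and `1` on `P_f†` (inputs sabotaged with `†`). -/
noncomputable def fsab {ι : Type} (f : PFn ι Bool Bool) : PFn ι Sab Bool :=
  fun p =>
    if IsSabotaged f Sab.star p then some false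
    else if IsSabotaged f Sab.dagger p then some true
    else none

open Classical in
/-- `f_usab`: the restriction of `f_sab` to inputs having exactly one `*` or `†` entry. -/
noncomputable def fusab {ι : Type} (f : PFn ι Bool Bool) : PFn ι Sab Bool :=
  fun p =>
    if ∃! i, p i = Sab.star ∨ p i = Sab.dagger then fsab f p else none

/-- Randomized sabotage complexity `RS(f) := R₀(f_sab)`. -/
noncomputable def RS {ι : Type} (f : PFn ι Bool Bool) : ℝ := R0 (fsab f)

/-- `RS_u(f) := R₀(f_usab)` (this is `0` automatically when `f_usab` has empty domain). -/
noncomputable def RSu {ι : Type} (f : PFn ι Bool Bool) : ℝ := R0 (fusab f)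

open Classical in
/-- Composition `f ∘ g` of partial functions: defined on an input exactly when every
inner copy of `g` is defined and the tuple of inner values lies in the domain of `f`. -/
noncomputable def pcomp {κ ι α β γ : Type} (f : PFn κ β γ) (g : PFn ι α β) :
    PFn (κ × ι) α γ :=
  fun x =>
    if h : ∀ i : κ, (g fun j => x (i, j)).isSome then
      f fun i => (g fun j => x (i, j)).get (h i)
    else none

/-- Index types for iterated self-composition. -/
def IterIdx (κ : Type) : ℕ → Type
  | 0 => κ
  | n + 1 => κ × IterIdx κ n

/-- `iterComp f n` is `f` composed with itself `n + 1` times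
(`iterComp f 0 = f`, `iterComp f (n+1) = f ∘ iterComp f n`). -/
noncomputable def iterComp {κ : Type} (f : PFn κ Bool Bool) : (n : ℕ) → PFn (IterIdx κ n) Bool Bool
  | 0 => f
  | n + 1 => pcomp f (iterComp f n)

/-! ### The index function -/

/-- The value of a bit-string read as a binary number (bit `i` has weight `2^i`). -/
def binval {b : ℕ} (x : Fin b → Bool) : ℕ := ∑ i, if x i then 2 ^ (i : ℕ) else 0

theorem sum_range_two_pow (b : ℕ) : ∑ i ∈ Finset.range b, 2 ^ i = 2 ^ b - 1 := by
  induction b with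
  | zero => simp
  | succ n ih =>
    rw [Finset.sum_range_succ, ih, pow_succ]
    have : 1 ≤ 2 ^ n := Nat.one_le_two_pow
    omega

theorem binval_lt {b : ℕ} (x : Fin b → Bool) : binval x < 2 ^ b := by
  have h1 : binval x ≤ ∑ i : Fin b, 2 ^ (i : ℕ) := by
    refine Finset.sum_le_sum fun i _ => ?_
    split <;> simp
  have h2 : ∑ i : Fin b, 2 ^ (i : ℕ) = 2 ^ b - 1 := by
    rw [Fin.sum_univ_eq_sum_range (fun i => 2 ^ i) b]
    exact sum_range_two_pow b
  have h3 : 0 < 2 ^ b := Nat.pow_pos (by norm_num)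
  omega

/-- The largest `c` with `c + 2^c ≤ m`. -/
def indexC (m : ℕ) : ℕ := Nat.findGreatest (fun c => c + 2 ^ c ≤ m) m

/-- The index function `Ind_m : {0,1}^m → {0,1}`: the first `c` bits (where `c` is the
largest integer with `c + 2^c ≤ m`) are read as a binary address `y` into the next
`2^c` bits, and the output is the addressed bit. -/
def IndFn (m : ℕ) : PFn (Fin m) Bool Bool :=
  fun x =>
    let c := indexC m
    let y := ∑ i : Fin m, if (i : ℕ) < c ∧ x i = true then 2 ^ (i : ℕ) else 0
    if h : c + y < m then some (x ⟨c + y, h⟩) else none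

/-- `f^{⊕c}_ind`: the index function on `c + 2^c` bits with `f` composed into each of
the `c` address bits only. -/
def findex {n : ℕ} (f : PFn (Fin n) Bool Bool) (c : ℕ) :
    PFn ((Fin c × Fin n) ⊕ Fin (2 ^ c)) Bool Bool :=
  fun x =>
    if h : ∀ i : Fin c, (f fun j => x (Sum.inl (i, j))).isSome then
      some (x (Sum.inr ⟨binval fun i => (f fun j => x (Sum.inl (i, j))).get (h i),
        binval_lt _⟩))
    else none

/-!
Let `A` be an `ε`-error algorithm for `f ∘ g` of expected cost `T`. On an input `z` of `f`, draw
for every block `i` a sabotaged input `q i` of `g` and run `A` on the resulting sabotaged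
string; the first time `A` reads a `*` or `†` in block `i`, query `z i` and continue on block `i`
with an input of `g` of value `z i` consistent with `q i`. This computes `f` with error `ε`,
and it pays one query for each block in which the finder induced by `A` hits a sabotaged entry.

If the `q i` are drawn independently from a hard distribution `μ`, under which every finder
spends at least `RS g` expected queries per unit of probability of hitting, the expected cost
is at most `T / RS g`. Such a `μ` exists by LP duality (Gordan's alternative): otherwise some
mixture of finders beats the ratio on every sabotaged input, and repeating it until it hits
solves `fsab g` with zero error in fewer than `RS g` expected queries.
-/

open Finset

theorem forall_nonpos_and_nonneg_of_forall_pos_sum_mul_lt {ι : Type*} [Fintype ι]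
    {c : ι → ℝ} {u : ℝ} (h : ∀ y : ι → ℝ, (∀ i, 0 < y i) → ∑ i, c i * y i < u) :
    (∀ i, c i ≤ 0) ∧ 0 ≤ u := by
  classical
  have h1 : ∑ i, c i < u := by simpa using h 1 fun _ => one_pos
  refine ⟨fun i => ?_, ?_⟩
  · by_contra! hci
    have hy := h (fun j => (u - ∑ j, c j) / c i * (if i = j then 1 else 0) + 1)
      fun j => by split_ifs <;> positivity
    simp only [mul_add, mul_one, sum_add_distrib, mul_ite, mul_zero, sum_ite_eq, mem_univ,
      if_true, mul_div_cancel₀ _ hci.ne'] at hy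
    linarith
  · by_contra! hu
    have hC : ∑ i, c i < 0 := h1.trans hu
    have hy := h (fun _ => u / (2 * ∑ i, c i)) fun _ => div_pos_of_neg_of_neg hu (by linarith)
    rw [← sum_mul, mul_div_left_comm, div_mul_cancel_right₀ hC.ne] at hy
    linarith

/-- Gordan's alternative, by separating the convex hull of `S` from the open positive
orthant. -/
theorem exists_mem_stdSimplex_forall_sum_mul_nonpos {ι : Type*} [Fintype ι]
    {S : Set (ι → ℝ)} (hS : S.Nonempty) (h : ∀ y ∈ convexHull ℝ S, ∃ i, y i ≤ 0) :
    ∃ μ ∈ stdSimplex ℝ ι, ∀ s ∈ S, ∑ i, μ i * s i ≤ 0 := by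
  classical
  set O : Set (ι → ℝ) := Set.univ.pi fun _ => Set.Ioi 0
  have hO : ∀ y, y ∈ O ↔ ∀ i, 0 < y i := by simp [O]
  have hdisj : Disjoint O (convexHull ℝ S) := Set.disjoint_left.2 fun y hyO hyS => by
    obtain ⟨i, hi⟩ := h y hyS
    exact ((hO y).1 hyO i).not_ge hi
  obtain ⟨f, u, hfO, hfS⟩ := geometric_hahn_banach_open (convex_pi fun _ _ => convex_Ioi 0)
    (isOpen_set_pi Set.finite_univ fun _ _ => isOpen_Ioi) (convex_convexHull ℝ S) hdisj
  set c : ι → ℝ := fun i => f fun j => if i = j then 1 else 0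
  have hf : ∀ y, f y = ∑ i, c i * y i := fun y => by
    rw [← f.coe_coe, LinearMap.pi_apply_eq_sum_univ]
    simp [c, mul_comm]
  have hfS' : ∀ s ∈ S, u ≤ ∑ i, c i * s i := fun s hs => hf s ▸ hfS s (subset_convexHull ℝ S hs)
  obtain ⟨hc, hu⟩ := forall_nonpos_and_nonneg_of_forall_pos_sum_mul_lt fun y hy =>
    hf y ▸ hfO y ((hO y).2 hy)
  have hC : ∑ i, c i < 0 := by
    refine (sum_nonpos fun i _ => hc i).lt_of_ne fun hC0 => ?_
    have hc0 := (sum_eq_zero_iff_of_nonpos fun i _ => hc i).1 hC0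
    obtain ⟨s, hs⟩ := hS
    have h1 := hfO 1 ((hO 1).2 fun _ => one_pos)
    have h2 := hfS' s hs
    simp only [hf, hc0, mem_univ, zero_mul, sum_const_zero] at h1 h2
    linarith
  refine ⟨fun i => c i / ∑ j, c j,
    ⟨fun i => div_nonneg_of_nonpos (hc i) hC.le, by rw [← sum_div, div_self hC.ne]⟩,
    fun s hs => ?_⟩
  calc ∑ i, c i / (∑ j, c j) * s i = (∑ i, c i * s i) / ∑ j, c j := by
        rw [sum_div]; exact sum_congr rfl fun i _ => div_mul_eq_mul_div _ _ _
    _ ≤ 0 := div_nonpos_of_nonneg_of_nonpos (hu.trans (hfS' s hs)) hC.le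

theorem sum_prod_mul_eq_sum_prod_mul_sum_update {κ σ : Type} [Fintype κ] [DecidableEq κ]
    [Fintype σ] (μ : σ → ℝ) (hμ : ∑ a, μ a = 1) (i : κ) (F : (κ → σ) → ℝ) :
    ∑ q, (∏ j, μ (q j)) * F q = ∑ q, (∏ j, μ (q j)) * ∑ a, μ a * F (Function.update q i a) := by
  have hweight : ∀ q a, (∏ j, μ (Function.update q i a j)) * μ (q i) = (∏ j, μ (q j)) * μ a := by
    intro q a
    rw [← mul_prod_erase univ _ (mem_univ i), ← mul_prod_erase univ (fun j => μ (q j)) (mem_univ i),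
      prod_congr rfl fun j hj => by rw [Function.update_of_ne (ne_of_mem_erase hj)],
      Function.update_self]
    ring
  let e : (κ → σ) × σ → (κ → σ) × σ := fun x => (Function.update x.1 i x.2, x.1 i)
  have he : Function.Involutive e := fun x => by simp [e]
  calc ∑ q, (∏ j, μ (q j)) * F q = ∑ x : (κ → σ) × σ, (∏ j, μ (x.1 j)) * μ x.2 * F x.1 := by
        simp only [Fintype.sum_prod_type, mul_right_comm _ _ (F _), ← mul_sum, hμ, mul_one]
    _ = ∑ x : (κ → σ) × σ, (∏ j, μ (x.1 j)) * μ x.2 * F (Function.update x.1 i x.2) :=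
        Fintype.sum_bijective e he.bijective _ _ fun x => by
          simp only [e, Function.update_idem, Function.update_eq_self, hweight]
    _ = _ := by simp only [Fintype.sum_prod_type, mul_sum, mul_assoc]

theorem sum_prod_mul_le_of_forall_update {κ σ : Type} [Fintype κ] [DecidableEq κ] [Fintype σ]
    {μ : σ → ℝ} (hμ : μ ∈ stdSimplex ℝ σ) (i : κ) {F G : (κ → σ) → ℝ}
    (h : ∀ q, ∑ a, μ a * F (Function.update q i a) ≤ ∑ a, μ a * G (Function.update q i a)) :
    ∑ q, (∏ j, μ (q j)) * F q ≤ ∑ q, (∏ j, μ (q j)) * G q := by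
  rw [sum_prod_mul_eq_sum_prod_mul_sum_update μ hμ.2 i F,
    sum_prod_mul_eq_sum_prod_mul_sum_update μ hμ.2 i G]
  exact sum_le_sum fun q _ => mul_le_mul_of_nonneg_left (h q) (prod_nonneg fun _ _ => hμ.1 _)

theorem prod_mem_stdSimplex {κ σ : Type} [Fintype κ] [DecidableEq κ] [Fintype σ] {μ : σ → ℝ}
    (hμ : μ ∈ stdSimplex ℝ σ) : (fun q : κ → σ => ∏ i, μ (q i)) ∈ stdSimplex ℝ (κ → σ) :=
  ⟨fun _ => prod_nonneg fun _ _ => hμ.1 _, by rw [← Fintype.prod_sum]; simp [hμ.2]⟩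

instance : Fintype Sab :=
  ⟨{Sab.zero, Sab.one, Sab.star, Sab.dagger}, by intro x; cases x <;> simp⟩

instance : Inhabited Sab := ⟨Sab.zero⟩

namespace Sab

def isSab : Sab → Bool
  | star | dagger => true
  | zero | one => false

/-- On a sabotaged entry this is the value of `fsab`: `*` reads as `false`, `†` as `true`. -/
def toBool : Sab → Bool
  | zero | star => false
  | one | dagger => true

@[simp] theorem isSab_ofBool (b : Bool) : (ofBool b).isSab = false := by cases b <;> rfl

@[simp] theorem toBool_ofBool (b : Bool) : (ofBool b).toBool = b := by cases b <;> rfl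

end Sab

theorem SabConsistent.toBool_eq {ι : Type} {p : ι → Sab} {x : ι → Bool}
    (h : SabConsistent p x) {i : ι} (hi : ¬(p i).isSab) : (p i).toBool = x i := by
  rcases h i with h | h | h <;> simp_all [Sab.isSab]

theorem sabConsistent_ofBool {ι : Type} (x : ι → Bool) : SabConsistent (Sab.ofBool ∘ x) x :=
  fun _ => Or.inl rfl

namespace DTree

variable {ι α β : Type}

def build [DecidableEq ι] (F : (ι → α) → β) : List ι → (ι → α) → DTree ι α β
  | [], acc => leaf (F acc)
  | i :: l, acc => node i fun a => build F l (Function.update acc i a)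

theorem output_build [DecidableEq ι] (F : (ι → α) → β) (l : List ι) (acc x : ι → α) :
    (build F l acc).output x = F fun i => if i ∈ l then x i else acc i := by
  induction l generalizing acc with
  | nil => simp [build, output]
  | cons i l ih =>
    simp only [build, output, ih, List.mem_cons]
    congr 1
    funext j
    by_cases hj : j = i
    · simp [hj]
    · by_cases hjl : j ∈ l <;> simp [hj, hjl]

theorem cost_build [DecidableEq ι] (F : (ι → α) → β) (l : List ι) (acc x : ι → α) :
    (build F l acc).cost x = l.length := by
  induction l generalizing acc with
  | nil => rfl
  | cons i l ih => simp [build, cost, ih]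

noncomputable def readAll [Fintype ι] [DecidableEq ι] [Inhabited α] [Inhabited β]
    (f : PFn ι α β) : DTree ι α β :=
  build (fun x => (f x).getD default) univ.toList default

theorem output_readAll [Fintype ι] [DecidableEq ι] [Inhabited α] [Inhabited β]
    (f : PFn ι α β) (x : ι → α) : (readAll f).output x = (f x).getD default := by
  simp [readAll, output_build]

theorem cost_readAll [Fintype ι] [DecidableEq ι] [Inhabited α] [Inhabited β]
    (f : PFn ι α β) (x : ι → α) : (readAll f).cost x = Fintype.card ι := by
  simp [readAll, cost_build]

def findsSab : DTree ι Sab β → (ι → Sab) → Bool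
  | leaf _, _ => false
  | node i next, p => (p i).isSab || (next (p i)).findsSab p

theorem findsSab_ofBool (t : DTree ι Sab β) (x : ι → Bool) :
    t.findsSab (Sab.ofBool ∘ x) = false := by
  induction t with
  | leaf => rfl
  | node i next ih => simp [findsSab, ih]

def untilSab : DTree ι Sab Unit → DTree ι Sab Bool → DTree ι Sab Bool
  | leaf _, k => k
  | node i next, k => node i fun s => if s.isSab then leaf s.toBool else (next s).untilSab k

theorem output_untilSab {p : ι → Sab} {b : Bool}
    (hp : ∀ i, (p i).isSab → (p i).toBool = b) (t : DTree ι Sab Unit) {k : DTree ι Sab Bool}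
    (hk : k.output p = b) : (t.untilSab k).output p = b := by
  induction t with
  | leaf => exact hk
  | node i next ih =>
    by_cases hs : (p i).isSab <;> simp [untilSab, output, hs, hp, ih]

theorem cost_untilSab_le (t : DTree ι Sab Unit) (k : DTree ι Sab Bool) (p : ι → Sab) :
    (t.untilSab k).cost p ≤ t.cost p + if t.findsSab p then 0 else k.cost p := by
  induction t with
  | leaf => simp [untilSab, cost, findsSab]
  | node i next ih =>
    by_cases hs : (p i).isSab
    · simp [untilSab, cost, findsSab, hs]
    · simpa [untilSab, cost, findsSab, hs, add_right_comm _ 1] using ih (p i)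

end DTree

namespace RandAlg

variable {ι α β : Type}

def ofTree (t : DTree ι α β) : RandAlg ι α β where
  Ω := Unit
  p _ := 1
  nonneg _ := zero_le_one
  sum_one := by simp
  tree _ := t

noncomputable def expect (A : RandAlg ι α β) (φ : DTree ι α β → ℝ) : ℝ :=
  letI := A.fin
  ∑ ω, A.p ω * φ (A.tree ω)

theorem expCost_eq_expect (A : RandAlg ι α β) (x : ι → α) :
    A.expCost x = A.expect fun t => (t.cost x : ℝ) := rfl

theorem succProb_eq_expect [DecidableEq β] (A : RandAlg ι α β) (x : ι → α) (b : β) :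
    A.succProb x b = A.expect fun t => if t.output x = b then 1 else 0 := by
  simp only [succProb, expect, mul_ite, mul_one, mul_zero]
  congr!

@[simp] theorem tree_ofTree (t : DTree ι α β) (ω : (ofTree t).Ω) : (ofTree t).tree ω = t := rfl

@[simp] theorem expect_ofTree (t : DTree ι α β) (φ : DTree ι α β → ℝ) :
    (ofTree t).expect φ = φ t := by
  show ∑ _ : Unit, 1 * φ t = φ t
  simp

theorem expect_mono (A : RandAlg ι α β) {φ ψ : DTree ι α β → ℝ} (h : ∀ t, φ t ≤ ψ t) :
    A.expect φ ≤ A.expect ψ :=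
  letI := A.fin
  sum_le_sum fun ω _ => mul_le_mul_of_nonneg_left (h _) (A.nonneg ω)

theorem expect_nonneg (A : RandAlg ι α β) {φ : DTree ι α β → ℝ} (h : ∀ t, 0 ≤ φ t) :
    0 ≤ A.expect φ :=
  letI := A.fin
  sum_nonneg fun ω _ => mul_nonneg (A.nonneg ω) (h _)

theorem expCost_nonneg (A : RandAlg ι α β) (x : ι → α) : 0 ≤ A.expCost x := by
  rw [expCost_eq_expect]
  exact A.expect_nonneg fun _ => Nat.cast_nonneg _

theorem expect_const_add_mul (A : RandAlg ι α β) (a b : ℝ) (φ : DTree ι α β → ℝ) :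
    A.expect (fun t => a + b * φ t) = a + b * A.expect φ := by
  let _ := A.fin
  simp only [expect, mul_add, sum_add_distrib, ← sum_mul, A.sum_one, one_mul, mul_sum]
  congr 1
  exact sum_congr rfl fun ω _ => by ring

theorem expect_const (A : RandAlg ι α β) (c : ℝ) : A.expect (fun _ => c) = c := by
  simpa using A.expect_const_add_mul c 0 fun _ => 0

theorem expect_const_mul (A : RandAlg ι α β) (b : ℝ) (φ : DTree ι α β → ℝ) :
    A.expect (fun t => b * φ t) = b * A.expect φ := by
  simpa using A.expect_const_add_mul 0 b φ

theorem expect_sum_mul {κ : Type} [Fintype κ] (A : RandAlg ι α β) (w : κ → ℝ)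
    (φ : κ → DTree ι α β → ℝ) :
    A.expect (fun t => ∑ k, w k * φ k t) = ∑ k, w k * A.expect (φ k) := by
  let _ := A.fin
  simp only [expect, mul_sum]
  rw [sum_comm]
  exact sum_congr rfl fun k _ => sum_congr rfl fun ω _ => by ring

theorem succProb_eq_one (A : RandAlg ι α β) {x : ι → α} {b : β}
    (h : ∀ ω, (A.tree ω).output x = b) : A.succProb x b = 1 := by
  let _ := A.fin
  simp [succProb, h, A.sum_one]

def mapMix {ι' α' β' κ : Type} [Fintype κ] (A : RandAlg ι α β) (w : κ → ℝ)
    (hw : w ∈ stdSimplex ℝ κ) (F : κ → DTree ι α β → DTree ι' α' β') : RandAlg ι' α' β' where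
  Ω := A.Ω × κ
  fin := letI := A.fin; inferInstance
  p ω := A.p ω.1 * w ω.2
  nonneg ω := mul_nonneg (A.nonneg ω.1) (hw.1 ω.2)
  sum_one := by
    let _ := A.fin
    simp [Fintype.sum_prod_type, ← mul_sum, hw.2, A.sum_one]
  tree ω := F ω.2 (A.tree ω.1)

theorem expect_mapMix {ι' α' β' κ : Type} [Fintype κ] (A : RandAlg ι α β) (w : κ → ℝ)
    (hw : w ∈ stdSimplex ℝ κ) (F : κ → DTree ι α β → DTree ι' α' β')
    (φ : DTree ι' α' β' → ℝ) :
    (A.mapMix w hw F).expect φ = A.expect fun t => ∑ k, w k * φ (F k t) := by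
  let _ := A.fin
  refine (Fintype.sum_prod_type _).trans (sum_congr rfl fun ω _ => ?_)
  simp only [mul_sum]
  exact sum_congr rfl fun k _ => by simp only [mapMix]; ring

end RandAlg

theorem Rbar_le {ι α β : Type} {ε T : ℝ} {f : PFn ι α β} {A : RandAlg ι α β} (hT : 0 ≤ T)
    (hA : A.Computes f ε) (hAT : A.ECostLe f T) : Rbar ε f ≤ T :=
  csInf_le ⟨0, fun _ h => h.1⟩ ⟨hT, A, hA, hAT⟩

theorem le_Rbar {ι α β : Type} [Fintype ι] [DecidableEq ι] [Inhabited α] [Inhabited β]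
    {ε c : ℝ} {f : PFn ι α β} (hε : 0 ≤ ε)
    (h : ∀ T (A : RandAlg ι α β), 0 ≤ T → A.Computes f ε → A.ECostLe f T → c ≤ T) :
    c ≤ Rbar ε f := by
  refine le_csInf ⟨Fintype.card ι, Nat.cast_nonneg _, .ofTree (.readAll f), ?_, ?_⟩ ?_
  · intro x b hb
    rw [RandAlg.succProb_eq_one _ fun _ => by simp [DTree.output_readAll, hb]]
    linarith
  · intro x _
    rw [RandAlg.expCost_eq_expect, RandAlg.expect_ofTree, DTree.cost_readAll]
  · rintro T ⟨hT, A, hA, hAT⟩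
    exact h T A hT hA hAT

theorem Rbar_nonneg {ι α β : Type} (ε : ℝ) (f : PFn ι α β) : 0 ≤ Rbar ε f :=
  Real.sInf_nonneg fun _ h => h.1

theorem RS_nonneg {ι : Type} (g : PFn ι Bool Bool) : 0 ≤ RS g :=
  Rbar_nonneg 0 (fsab g)

section Sabotage

variable {ι : Type} {g : PFn ι Bool Bool}

theorem IsSabotaged.exists_consistent {s : Sab} {p : ι → Sab} (h : IsSabotaged g s p)
    (b : Bool) : ∃ x, g x = some b ∧ SabConsistent p x := by
  obtain ⟨-, x, y, hx, hy, hxy, hpx, hpy⟩ := h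
  obtain ⟨b₁, hb₁⟩ := Option.isSome_iff_exists.1 hx
  obtain ⟨b₂, hb₂⟩ := Option.isSome_iff_exists.1 hy
  rcases Bool.eq_or_eq_not b b₁ with rfl | rfl
  · exact ⟨x, hb₁, hpx⟩
  · obtain rfl : b₂ = !b₁ := by revert hxy; cases b₁ <;> cases b₂ <;> simp_all
    exact ⟨y, hb₂, hpy⟩

theorem isSabotaged_of_fsab_isSome {p : ι → Sab} (h : (fsab g p).isSome) :
    ∃ s, IsSabotaged g s p := by
  unfold fsab at h
  split_ifs at h with h₁ h₂
  exacts [⟨_, h₁⟩, ⟨_, h₂⟩, absurd h Bool.false_ne_true]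

theorem toBool_eq_of_fsab_eq_some {p : ι → Sab} {b : Bool} (h : fsab g p = some b) {i : ι}
    (hi : (p i).isSab) : (p i).toBool = b := by
  unfold fsab at h
  split_ifs at h with h₁ h₂ <;> cases h
  · rcases h₁.1 i with h | h | h <;> simp_all [Sab.isSab, Sab.toBool]
  · rcases h₂.1 i with h | h | h <;> simp_all [Sab.isSab, Sab.toBool]

variable (g) in
def SabDom : Type := {p : ι → Sab // (fsab g p).isSome}

noncomputable instance [Fintype ι] : Fintype (SabDom g) := by
  classical exact Subtype.fintype _

namespace SabDom

theorem exists_consistent (p : SabDom g) (b : Bool) :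
    ∃ x, g x = some b ∧ SabConsistent p.1 x :=
  (isSabotaged_of_fsab_isSome p.2).choose_spec.exists_consistent b

noncomputable def input (p : SabDom g) (b : Bool) : ι → Bool :=
  (p.exists_consistent b).choose

theorem g_input (p : SabDom g) (b : Bool) : g (p.input b) = some b :=
  (p.exists_consistent b).choose_spec.1

theorem sabConsistent_input (p : SabDom g) (b : Bool) : SabConsistent p.1 (p.input b) :=
  (p.exists_consistent b).choose_spec.2

end SabDom

theorem nonempty_sabDom_of_RS_pos (h : 0 < RS g) : Nonempty (SabDom g) := by
  by_contra hne
  have hdom : ∀ p, fsab g p = none := fun p =>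
    Option.not_isSome_iff_eq_none.1 fun hp => hne ⟨⟨p, hp⟩⟩
  have : RS g ≤ 0 :=
    Rbar_le le_rfl (A := .ofTree (.leaf false)) (fun p b hp => by simp [hdom] at hp)
      (fun p hp => by simp [hdom] at hp)
  linarith

end Sabotage

namespace RandAlg

variable {ι β : Type}

noncomputable def findProb (R : RandAlg ι Sab β) (p : ι → Sab) : ℝ :=
  R.expect fun t => if t.findsSab p then 1 else 0

theorem findProb_le_one (R : RandAlg ι Sab β) (p : ι → Sab) : R.findProb p ≤ 1 := by
  have := R.expect_mono (φ := fun t => if t.findsSab p then 1 else 0) (ψ := fun _ => 1)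
    fun t => by split_ifs <;> norm_num
  rwa [expect_const] at this

noncomputable def untilSab (R : RandAlg ι Sab Unit) (B : RandAlg ι Sab Bool) :
    RandAlg ι Sab Bool :=
  letI := R.fin
  B.mapMix R.p ⟨R.nonneg, R.sum_one⟩ fun ω => (R.tree ω).untilSab

theorem expCost_untilSab_le (R : RandAlg ι Sab Unit) (B : RandAlg ι Sab Bool) (p : ι → Sab) :
    (R.untilSab B).expCost p ≤ R.expCost p + (1 - R.findProb p) * B.expCost p := by
  let _ := R.fin
  have hround : ∀ t : DTree ι Sab Bool,
      ∑ ω, R.p ω * (((R.tree ω).untilSab t).cost p : ℝ)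
        ≤ R.expCost p + (1 - R.findProb p) * t.cost p := by
    intro t
    calc ∑ ω, R.p ω * (((R.tree ω).untilSab t).cost p : ℝ)
        ≤ ∑ ω, R.p ω * ((R.tree ω).cost p
            + (1 - if (R.tree ω).findsSab p then 1 else 0) * t.cost p) := by
          refine sum_le_sum fun ω _ => mul_le_mul_of_nonneg_left ?_ (R.nonneg ω)
          have := DTree.cost_untilSab_le (R.tree ω) t p
          split_ifs at this ⊢ <;> simp only [sub_zero, sub_self, one_mul, zero_mul] <;>
            exact_mod_cast this
      _ = R.expCost p + (1 - R.findProb p) * t.cost p := by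
          simp only [expCost, findProb, expect, mul_add, sum_add_distrib, sub_mul, mul_sub,
            sum_sub_distrib, ← sum_mul, R.sum_one, one_mul]
          simp only [sum_mul, mul_assoc]
  calc (R.untilSab B).expCost p
      = B.expect fun t => ∑ ω, R.p ω * (((R.tree ω).untilSab t).cost p : ℝ) :=
        (expCost_eq_expect _ _).trans (expect_mapMix _ _ _ _ _)
    _ ≤ B.expect fun t => R.expCost p + (1 - R.findProb p) * t.cost p := expect_mono _ hround
    _ = _ := expect_const_add_mul _ _ _ _

end RandAlg

section Finders

variable {ι : Type} [Fintype ι] [DecidableEq ι] (g : PFn ι Bool Bool)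

noncomputable def repeatUntilSab (R : RandAlg ι Sab Unit) : ℕ → RandAlg ι Sab Bool
  | 0 => .ofTree (.readAll (fsab g))
  | r + 1 => R.untilSab (repeatUntilSab R r)

variable {g}

theorem output_repeatUntilSab (R : RandAlg ι Sab Unit) {p : ι → Sab} {b : Bool}
    (hp : fsab g p = some b) (r : ℕ) (ω : (repeatUntilSab g R r).Ω) :
    ((repeatUntilSab g R r).tree ω).output p = b := by
  induction r with
  | zero =>
    show (DTree.readAll (fsab g)).output p = b
    simp [DTree.output_readAll, hp]
  | succ r ih =>
    exact DTree.output_untilSab (fun i => toBool_eq_of_fsab_eq_some hp) _ (ih ω.1)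

theorem expCost_repeatUntilSab_le (R : RandAlg ι Sab Unit) {p : ι → Sab}
    (hp : 0 < R.findProb p) (r : ℕ) :
    (repeatUntilSab g R r).expCost p
      ≤ R.expCost p / R.findProb p + (1 - R.findProb p) ^ r * Fintype.card ι := by
  have hc : 0 ≤ R.expCost p := R.expCost_nonneg p
  have hq : 0 ≤ 1 - R.findProb p := sub_nonneg.2 (R.findProb_le_one p)
  induction r with
  | zero =>
    simp only [repeatUntilSab, RandAlg.expCost_eq_expect, RandAlg.expect_ofTree,
      DTree.cost_readAll, pow_zero, one_mul, le_add_iff_nonneg_left]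
    positivity
  | succ r ih =>
    calc (repeatUntilSab g R (r + 1)).expCost p
        ≤ R.expCost p + (1 - R.findProb p) * (repeatUntilSab g R r).expCost p :=
          R.expCost_untilSab_le _ p
      _ ≤ R.expCost p + (1 - R.findProb p) *
            (R.expCost p / R.findProb p + (1 - R.findProb p) ^ r * Fintype.card ι) := by
          gcongr
      _ = _ := by field_simp; ring

/-- Otherwise repeating `R` until it hits would solve `fsab g` with zero error in fewer than
`RS g` expected queries. -/
theorem exists_RS_mul_findProb_le_expCost (hRS : 0 < RS g) (R : RandAlg ι Sab Unit) :
    ∃ p : SabDom g, RS g * R.findProb p.1 ≤ R.expCost p.1 := by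
  by_contra! h
  have hq : ∀ p : SabDom g, 0 < R.findProb p.1 := fun p =>
    pos_of_mul_pos_right ((R.expCost_nonneg _).trans_lt (h p)) hRS.le
  have hev : ∀ p : SabDom g, ∀ᶠ r in Filter.atTop,
      R.expCost p.1 / R.findProb p.1 + (1 - R.findProb p.1) ^ r * Fintype.card ι < RS g := by
    intro p
    refine Filter.Tendsto.eventually_lt_const ((div_lt_iff₀ (hq p)).2 (h p)) ?_
    simpa using ((tendsto_pow_atTop_nhds_zero_of_lt_one
      (sub_nonneg.2 (R.findProb_le_one _)) (sub_lt_self 1 (hq p))).mul_const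
      (Fintype.card ι : ℝ)).const_add (R.expCost p.1 / R.findProb p.1)
  obtain ⟨r, hr⟩ := (Filter.eventually_all.2 hev).exists
  have := nonempty_sabDom_of_RS_pos hRS
  obtain ⟨p₀, hp₀⟩ := Finite.exists_max fun p : SabDom g => (repeatUntilSab g R r).expCost p.1
  have hRS_le : RS g ≤ (repeatUntilSab g R r).expCost p₀.1 := by
    refine Rbar_le (RandAlg.expCost_nonneg _ _) (fun p b hpb => ?_) fun p hp => hp₀ ⟨p, hp⟩
    rw [RandAlg.succProb_eq_one _ (output_repeatUntilSab R hpb r)]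
    norm_num
  linarith [expCost_repeatUntilSab_le (g := g) R (hq p₀) r, hr p₀]

end Finders

section HardDistribution

variable {ι : Type} [Fintype ι] [DecidableEq ι] {g : PFn ι Bool Bool}

theorem exists_hard_distribution (hRS : 0 < RS g) :
    ∃ μ ∈ stdSimplex ℝ (SabDom g), ∀ t : DTree ι Sab Unit,
      RS g * ∑ p, μ p * (if t.findsSab p.1 then 1 else 0) ≤ ∑ p, μ p * t.cost p.1 := by
  set Φ : DTree ι Sab Unit → SabDom g → ℝ :=
    fun t p => RS g * (if t.findsSab p.1 then 1 else 0) - t.cost p.1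
  have hmix : ∀ y ∈ convexHull ℝ (Set.range Φ), ∃ p, y p ≤ 0 := by
    intro y hy
    obtain ⟨κ, _, w, z, hw0, hw1, hz, rfl⟩ := mem_convexHull_iff_exists_fintype.1 hy
    choose T hT using hz
    obtain ⟨p, hp⟩ := exists_RS_mul_findProb_le_expCost hRS
      { Ω := κ, p := w, nonneg := hw0, sum_one := hw1, tree := T }
    refine ⟨p, ?_⟩
    simp only [RandAlg.findProb, RandAlg.expCost, RandAlg.expect, mul_sum,
      mul_left_comm (RS g)] at hp
    simp only [Finset.sum_apply, Pi.smul_apply, ← hT, Φ, smul_eq_mul, mul_sub, sum_sub_distrib]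
    exact sub_nonpos.2 hp
  obtain ⟨μ, hμ, hΦ⟩ :=
    exists_mem_stdSimplex_forall_sum_mul_nonpos (S := Set.range Φ) ⟨_, .leaf (), rfl⟩ hmix
  refine ⟨μ, hμ, fun t => ?_⟩
  have := hΦ _ ⟨t, rfl⟩
  simp only [Φ, mul_sub, sum_sub_distrib, mul_left_comm _ (RS g), ← mul_sum] at this
  linarith

end HardDistribution

section Composition

variable {κ ι β : Type} {g : PFn ι Bool Bool}

noncomputable def blockInput (q : κ → SabDom g) (z : κ → Bool) : κ × ι → Bool :=
  fun ij => (q ij.1).input (z ij.1) ij.2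

theorem sabConsistent_blockInput (q : κ → SabDom g) (z : κ → Bool) (i : κ) :
    SabConsistent (q i).1 fun j => blockInput q z (i, j) :=
  (q i).sabConsistent_input (z i)

theorem pcomp_blockInput (f : PFn κ Bool Bool) (q : κ → SabDom g) (z : κ → Bool) :
    pcomp f g (blockInput q z) = f z := by
  have hg : ∀ i, g (fun j => blockInput q z (i, j)) = some (z i) := fun i => (q i).g_input (z i)
  rw [pcomp, dif_pos fun i => by simp [hg]]
  simp [hg]

variable [DecidableEq κ]

namespace DTree

/-- The finder that `t` induces on block `i` when the other blocks are answered by `X`. -/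
def copyFinder (X : κ × ι → Bool) (i : κ) : DTree (κ × ι) Bool β → DTree ι Sab Unit
  | leaf _ => leaf ()
  | node ij next =>
    if ij.1 = i then
      node ij.2 fun s => if s.isSab then leaf () else copyFinder X i (next s.toBool)
    else copyFinder X i (next (X ij))

variable {X : κ × ι → Bool}

theorem copyFinder_congr {X' : κ × ι → Bool} {i : κ} (h : ∀ ij : κ × ι, ij.1 ≠ i → X ij = X' ij)
    (t : DTree (κ × ι) Bool β) : copyFinder X i t = copyFinder X' i t := by
  induction t with
  | leaf => rfl
  | node ij next ih =>
    by_cases hi : ij.1 = i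
    · simp only [copyFinder, hi, if_true, ih]
    · simp only [copyFinder, hi, if_false, h ij hi, ih]

theorem cost_copyFinder_node_le {i : κ} {p : ι → Sab} (hp : SabConsistent p fun j => X (i, j))
    (ij : κ × ι) (next : Bool → DTree (κ × ι) Bool β) :
    (copyFinder X i (node ij next)).cost p
      ≤ (if ij.1 = i then 1 else 0) + (copyFinder X i (next (X ij))).cost p := by
  obtain ⟨i', j⟩ := ij
  by_cases hi : i' = i
  · subst hi
    by_cases hs : (p j).isSab
    · simp [copyFinder, cost, hs]
    · simp [copyFinder, cost, hs, hp.toBool_eq hs, add_comm]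
  · simp [copyFinder, hi]

theorem sum_cost_copyFinder_le [Fintype κ] {p : κ → ι → Sab}
    (hp : ∀ i, SabConsistent (p i) fun j => X (i, j)) (t : DTree (κ × ι) Bool β) :
    ∑ i, (copyFinder X i t).cost (p i) ≤ t.cost X := by
  induction t with
  | leaf => simp [copyFinder, cost]
  | node ij next ih =>
    calc ∑ i, (copyFinder X i (node ij next)).cost (p i)
        ≤ ∑ i, ((if ij.1 = i then 1 else 0) + (copyFinder X i (next (X ij))).cost (p i)) :=
          sum_le_sum fun i _ => cost_copyFinder_node_le (hp i) ij next
      _ = ∑ i, (copyFinder X i (next (X ij))).cost (p i) + 1 := by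
          rw [sum_add_distrib, sum_ite_eq]
          simp [add_comm]
      _ ≤ (node ij next).cost X := Nat.add_le_add_right (ih (X ij)) 1

theorem findsSab_copyFinder_node {i : κ} {p : ι → Sab} (hp : SabConsistent p fun j => X (i, j))
    {ij : κ × ι} {next : Bool → DTree (κ × ι) Bool β}
    (h : (copyFinder X i (next (X ij))).findsSab p) :
    (copyFinder X i (node ij next)).findsSab p := by
  obtain ⟨i', j⟩ := ij
  by_cases hi : i' = i
  · subst hi
    by_cases hs : (p j).isSab
    · simp [copyFinder, findsSab, hs]
    · simpa [copyFinder, findsSab, hs, hp.toBool_eq hs] using h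
  · simpa [copyFinder, hi] using h

theorem card_findsSab_copyFinder_update_lt [Fintype κ] {a : κ → ι → Sab}
    (ha : ∀ i, SabConsistent (a i) fun j => X (i, j)) {ij : κ × ι}
    {next : Bool → DTree (κ × ι) Bool β} (hs : (a ij.1 ij.2).isSab) (x : ι → Bool) :
    #{i | (copyFinder X i (next (X ij))).findsSab
        (Function.update a ij.1 (Sab.ofBool ∘ x) i)}
      < #{i | (copyFinder X i (node ij next)).findsSab (a i)} := by
  refine card_lt_card ((ssubset_iff_of_subset fun i hi => ?_).2 ⟨ij.1, ?_, ?_⟩)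
  · have hne : i ≠ ij.1 := by rintro rfl; simp [findsSab_ofBool] at hi
    simp only [mem_filter, mem_univ, true_and, Function.update_of_ne hne] at hi ⊢
    exact findsSab_copyFinder_node (ha i) hi
  · rw [mem_filter]
    exact ⟨mem_univ _, by simp [copyFinder, findsSab, hs]⟩
  · simp [findsSab_ofBool]

/-- Runs `t` on `blockInput q z` while querying only `z`: the state `a` holds `q i` until a
sabotaged entry of block `i` is read; then `z i` is queried and block `i` becomes
`(q i).input (z i)`. -/
noncomputable def simulate (q : κ → SabDom g) :
    DTree (κ × ι) Bool β → (κ → ι → Sab) → DTree κ Bool β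
  | leaf b, _ => leaf b
  | node ij next, a =>
    if (a ij.1 ij.2).isSab then
      node ij.1 fun b => simulate q (next ((q ij.1).input b ij.2))
        (Function.update a ij.1 (Sab.ofBool ∘ (q ij.1).input b))
    else simulate q (next (a ij.1 ij.2).toBool) a

variable {q : κ → SabDom g} {z : κ → Bool} {a : κ → ι → Sab}

theorem sabConsistent_update (ha : ∀ i, SabConsistent (a i) fun j => blockInput q z (i, j))
    (i₀ i : κ) :
    SabConsistent (Function.update a i₀ (Sab.ofBool ∘ (q i₀).input (z i₀)) i)
      fun j => blockInput q z (i, j) := by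
  by_cases hi : i = i₀
  · subst hi
    simpa [blockInput] using sabConsistent_ofBool ((q i).input (z i))
  · simpa [hi] using ha i

theorem output_simulate (t : DTree (κ × ι) Bool β)
    (ha : ∀ i, SabConsistent (a i) fun j => blockInput q z (i, j)) :
    (simulate q t a).output z = t.output (blockInput q z) := by
  induction t generalizing a with
  | leaf => rfl
  | node ij next ih =>
    by_cases hs : (a ij.1 ij.2).isSab
    · simp only [simulate, hs, if_true, output]
      exact ih _ (sabConsistent_update ha ij.1)
    · simp only [simulate, hs, output, (ha ij.1).toBool_eq hs]
      exact ih _ ha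

theorem cost_simulate_le [Fintype κ] (t : DTree (κ × ι) Bool β)
    (ha : ∀ i, SabConsistent (a i) fun j => blockInput q z (i, j)) :
    (simulate q t a).cost z ≤ #{i | (copyFinder (blockInput q z) i t).findsSab (a i)} := by
  induction t generalizing a with
  | leaf => simp [simulate, cost]
  | node ij next ih =>
    by_cases hs : (a ij.1 ij.2).isSab
    · have hih := ih (blockInput q z ij) (sabConsistent_update ha ij.1)
      have hcard := card_findsSab_copyFinder_update_lt (next := next) ha hs
        ((q ij.1).input (z ij.1))
      simp only [simulate, hs, if_true, cost]
      exact Nat.succ_le_of_lt (hih.trans_lt hcard)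
    · simp only [simulate, hs, (ha ij.1).toBool_eq hs]
      exact (ih _ ha).trans <| card_le_card fun i => by
        simpa using findsSab_copyFinder_node (ha i)

end DTree

open DTree

variable [Fintype κ] [Fintype ι] {μ : SabDom g → ℝ}

theorem RS_mul_sum_cost_simulate_le (hμ : μ ∈ stdSimplex ℝ (SabDom g))
    (hard : ∀ t : DTree ι Sab Unit,
      RS g * ∑ p, μ p * (if t.findsSab p.1 then 1 else 0) ≤ ∑ p, μ p * t.cost p.1)
    (t : DTree (κ × ι) Bool β) (z : κ → Bool) :
    RS g * ∑ q : κ → SabDom g, (∏ i, μ (q i)) * (simulate q t fun i => (q i).1).cost z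
      ≤ ∑ q : κ → SabDom g, (∏ i, μ (q i)) * t.cost (blockInput q z) := by
  have hw := prod_mem_stdSimplex (κ := κ) hμ
  set T : (κ → SabDom g) → κ → DTree ι Sab Unit := fun q i => copyFinder (blockInput q z) i t
  -- The finder on block `i` does not depend on `q i`, which is drawn from `μ` independently.
  have hblock : ∀ i, ∑ q : κ → SabDom g, (∏ j, μ (q j)) *
        (RS g * if (T q i).findsSab (q i).1 then 1 else 0)
      ≤ ∑ q : κ → SabDom g, (∏ j, μ (q j)) * (T q i).cost (q i).1 := by
    intro i
    refine sum_prod_mul_le_of_forall_update hμ i fun q => ?_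
    have hT : ∀ a, T (Function.update q i a) i = T q i := fun a =>
      copyFinder_congr (fun ij hij => by simp [blockInput, Function.update_of_ne hij]) t
    simpa only [hT, Function.update_self, mul_left_comm _ (RS g), ← mul_sum] using hard (T q i)
  calc RS g * ∑ q : κ → SabDom g, (∏ j, μ (q j)) * (simulate q t fun i => (q i).1).cost z
      ≤ RS g * ∑ q : κ → SabDom g, (∏ j, μ (q j)) *
          ∑ i, (if (T q i).findsSab (q i).1 then 1 else 0) := by
        refine mul_le_mul_of_nonneg_left (sum_le_sum fun q _ => ?_) (RS_nonneg g)
        refine mul_le_mul_of_nonneg_left ?_ (hw.1 q)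
        have := cost_simulate_le t fun i => sabConsistent_blockInput q z i
        rw [card_filter] at this
        exact_mod_cast this
    _ = ∑ i, ∑ q : κ → SabDom g, (∏ j, μ (q j)) *
          (RS g * if (T q i).findsSab (q i).1 then 1 else 0) := by
        simp only [mul_sum, mul_left_comm (RS g)]
        exact sum_comm
    _ ≤ ∑ i, ∑ q : κ → SabDom g, (∏ j, μ (q j)) * (T q i).cost (q i).1 :=
        sum_le_sum fun i _ => hblock i
    _ = ∑ q : κ → SabDom g, (∏ j, μ (q j)) * ∑ i, ((T q i).cost (q i).1 : ℝ) := by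
        simp only [mul_sum]
        exact sum_comm
    _ ≤ ∑ q : κ → SabDom g, (∏ j, μ (q j)) * t.cost (blockInput q z) := by
        refine sum_le_sum fun q _ => mul_le_mul_of_nonneg_left ?_ (hw.1 q)
        exact_mod_cast sum_cost_copyFinder_le (fun i => sabConsistent_blockInput q z i) t

variable [DecidableEq ι] {f : PFn κ Bool Bool} {ε T : ℝ} {A : RandAlg (κ × ι) Bool Bool}

theorem exists_randAlg_of_computes_pcomp (hRS : 0 < RS g) (hA : A.Computes (pcomp f g) ε)
    (hAT : A.ECostLe (pcomp f g) T) :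
    ∃ B : RandAlg κ Bool Bool, B.Computes f ε ∧ B.ECostLe f (T / RS g) := by
  obtain ⟨μ, hμ, hard⟩ := exists_hard_distribution hRS
  have hw := prod_mem_stdSimplex (κ := κ) hμ
  refine ⟨A.mapMix _ hw fun q t => t.simulate q fun i => (q i).1, fun z b hz => ?_,
    fun z hz => ?_⟩
  · have hsucc : ∀ q : κ → SabDom g, 1 - ε ≤ A.succProb (blockInput q z) b := fun q =>
      hA _ _ (by rw [pcomp_blockInput, hz])
    rw [RandAlg.succProb_eq_expect, RandAlg.expect_mapMix]
    simp only [output_simulate _ fun i => sabConsistent_blockInput _ z i]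
    rw [RandAlg.expect_sum_mul]
    calc 1 - ε = ∑ q : κ → SabDom g, (∏ i, μ (q i)) * (1 - ε) := by rw [← sum_mul, hw.2, one_mul]
      _ ≤ _ := sum_le_sum fun q _ => mul_le_mul_of_nonneg_left
          ((hsucc q).trans_eq (RandAlg.succProb_eq_expect _ _ _)) (hw.1 q)
  · rw [RandAlg.expCost_eq_expect, RandAlg.expect_mapMix, le_div_iff₀ hRS, mul_comm,
      ← RandAlg.expect_const_mul]
    calc (A.expect fun t => RS g * ∑ q : κ → SabDom g,
            (∏ i, μ (q i)) * ((t.simulate q fun i => (q i).1).cost z : ℝ))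
        ≤ A.expect fun t => ∑ q : κ → SabDom g, (∏ i, μ (q i)) * t.cost (blockInput q z) :=
          A.expect_mono fun t => RS_mul_sum_cost_simulate_le hμ hard t z
      _ = ∑ q : κ → SabDom g, (∏ i, μ (q i)) * A.expCost (blockInput q z) :=
          RandAlg.expect_sum_mul _ _ _
      _ ≤ ∑ q : κ → SabDom g, (∏ i, μ (q i)) * T := sum_le_sum fun q _ =>
          mul_le_mul_of_nonneg_left (hAT _ (by rw [pcomp_blockInput]; exact hz)) (hw.1 q)
      _ = T := by rw [← sum_mul, hw.2, one_mul]

end Composition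

theorem Rbar_composition_general {n m : ℕ} (f : PFn (Fin n) Bool Bool)
    (g : PFn (Fin m) Bool Bool) (ε : ℝ) (hε0 : 0 ≤ ε) :
    Rbar ε f * RS g ≤ Rbar ε (pcomp f g) := by
  rcases (RS_nonneg g).eq_or_lt with hRS | hRS
  · rw [← hRS, mul_zero]
    exact Rbar_nonneg _ _
  refine le_Rbar hε0 fun T A hT hA hAT => ?_
  obtain ⟨B, hB, hBT⟩ := exists_randAlg_of_computes_pcomp hRS hA hAT
  calc Rbar ε f * RS g ≤ T / RS g * RS g := by
        gcongr
        exact Rbar_le (div_nonneg hT hRS.le) hB hBT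
    _ = T := div_mul_cancel₀ T hRS.ne'

/-- **Composition of expected randomized query complexity with sabotage complexity:**
for all partial Boolean functions `f`, `g` and every `ε ∈ [0, 1/2)`,
`R̄_ε(f ∘ g) ≥ R̄_ε(f) · RS(g)`. -/
theorem Rbar_composition {n m : ℕ} (f : PFn (Fin n) Bool Bool)
    (g : PFn (Fin m) Bool Bool) (ε : ℝ) (hε0 : 0 ≤ ε) (hε : ε < 1/2) :
    Rbar ε f * RS g ≤ Rbar ε (pcomp f g) :=
  Rbar_composition_general f g ε hε0
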